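/- arXiv:2507.12923 — 6 statements merged into one kernel-verified Lean document; each statement's English description precedes it below -/
import Mathlib

section
/- Let G ≤ K be finite groups such that K is generated by G together with its center Z(K). Then every irreducible complex representation ρ of G extends to an irreducible representation ρ̂ of K, i.e. there exists an irreducible representation ρ̂ of K whose restriction to G equals ρ. -/
/-!
By Schur's lemma `ρ` acts on the central subgroup `G ∩ Z(K)` through a character with values in
`ℂˣ`, and since `Z(K)` is finite abelian this character extends to a character `ω` of `Z(K)`.
Then `g z ↦ ρ g * ω z` is well defined on `K = G Z(K)`, because the surjection
`G × Z(K) → K` has kernel `{(t, t⁻¹)}` on which `ρ` and `ω` cancel. The resulting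
representation restricts to `ρ` on `G`, so every `K`-invariant subspace is `G`-invariant.
-/

noncomputable section

/-- A representation is irreducible if its only invariant subspaces are `⊥` and `⊤`. -/
def Representation.IsIrred {k G V : Type*} [CommRing k] [Group G] [AddCommGroup V]
    [Module k V] (ρ : Representation k G V) : Prop :=
  ∀ p : Submodule k V, (∀ g : G, ∀ v ∈ p, ρ g v ∈ p) → p = ⊥ ∨ p = ⊤

open Subgroup

namespace MonoidHom

variable {H K M : Type*} [Group H] [Group K] [Monoid M]

theorem exists_comp_eq_of_surjective {φ : H →* K} (hφ : Function.Surjective φ) {ψ : H →* M}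
    (hker : φ.ker ≤ ψ.ker) : ∃ F : K →* M, F.comp φ = ψ :=
  ⟨(QuotientGroup.lift φ.ker ψ hker).comp
      (QuotientGroup.quotientKerEquivOfSurjective φ hφ).symm.toMonoidHom,
    MonoidHom.ext fun x => by
      have hx : (QuotientGroup.quotientKerEquivOfSurjective φ hφ).symm (φ x) = x :=
        (MulEquiv.symm_apply_eq _).mpr rfl
      rw [comp_apply, comp_apply, MulEquiv.coe_toMonoidHom, hx, QuotientGroup.lift_mk]⟩

theorem exists_extend_of_sup_center_eq_top {G : Subgroup K} (hK : G ⊔ center K = ⊤)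
    (f : G →* M) (χ : center K →* M) (hcomm : ∀ g z, Commute (f g) (χ z))
    (hagree : ∀ (g : G) (z : center K), (g : K) = z → f g = χ z) :
    ∃ F : K →* M, ∀ g : G, F g = f g := by
  have hGZ : ∀ g z, Commute (G.subtype g) ((center K).subtype z) :=
    fun g z => mem_center_iff.mp z.2 g
  have hφ : Function.Surjective (G.subtype.noncommCoprod (center K).subtype hGZ) := by
    rw [← range_eq_top, noncommCoprod_range, range_subtype, range_subtype, hK]
  obtain ⟨F, hF⟩ := exists_comp_eq_of_surjective hφ (ψ := f.noncommCoprod χ hcomm) <| by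
    rintro ⟨g, z⟩ hgz
    have hz : (g⁻¹ : G) = (z : K) := (eq_inv_of_mul_eq_one_right hgz).symm
    rw [mem_ker, noncommCoprod_apply, ← hagree _ _ hz, ← map_mul, mul_inv_cancel, map_one]
  exact ⟨F, fun g => by simpa using DFunLike.congr_fun hF (g, 1)⟩

end MonoidHom

namespace Representation

theorem IsIrred.of_comp {k G H V : Type*} [CommRing k] [Group G] [Group H] [AddCommGroup V]
    [Module k V] {ρ : Representation k G V} (ι : H →* G)
    (h : IsIrred (ρ.comp ι)) : ρ.IsIrred :=
  fun p hp => h p fun g => hp (ι g)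

variable {k G V : Type*} [Field k] [IsAlgClosed k] [Group G] [AddCommGroup V] [Module k V]
variable [FiniteDimensional k V] {ρ : Representation k G V}

theorem IsIrred.exists_eq_algebraMap_of_commute (hρ : ρ.IsIrred) {f : Module.End k V}
    (hf : ∀ g, Commute f (ρ g)) : ∃ c : k, f = algebraMap k _ c := by
  cases subsingleton_or_nontrivial V
  · exact ⟨0, Subsingleton.elim _ _⟩
  obtain ⟨c, hc⟩ := f.exists_eigenvalue
  have hinv : ∀ g, ∀ v ∈ f.eigenspace c, ρ g v ∈ f.eigenspace c :=
    fun g => Module.End.mapsTo_genEigenspace_of_comm (hf g) c 1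
  have htop : f.eigenspace c = ⊤ := (hρ _ hinv).resolve_left hc
  exact ⟨c, LinearMap.ext fun v => Module.End.mem_eigenspace_iff.mp (htop ▸ Submodule.mem_top)⟩

theorem IsIrred.exists_monoidHom_eq_algebraMap (hρ : ρ.IsIrred) {A : Type*} [Group A]
    (ι : A →* G) (hι : ∀ a g, Commute (ι a) g) :
    ∃ μ : A →* kˣ, ∀ a, ρ (ι a) = algebraMap k _ (μ a) := by
  cases subsingleton_or_nontrivial V
  · exact ⟨1, fun _ => Subsingleton.elim _ _⟩
  have hinj : Function.Injective (algebraMap k (Module.End k V)) := (algebraMap k _).injective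
  choose c hc using fun a => hρ.exists_eq_algebraMap_of_commute (f := ρ (ι a))
    fun g => by rw [commute_iff_eq, ← map_mul, ← map_mul, (hι a g).eq]
  let μ : A →* k :=
    { toFun := c
      map_one' := hinj <| by rw [← hc, map_one, map_one, map_one]
      map_mul' := fun a b => hinj <| by rw [map_mul, ← hc, ← hc, ← hc, map_mul, map_mul] }
  exact ⟨μ.toHomUnits, hc⟩

end Representation

/-- Let `G ≤ K` be finite groups with `K = ⟨G, Z(K)⟩`.  Then every irreducible
complex representation `ρ` of `G` extends to an irreducible representation `ρK` of `K`,
i.e. there is an irreducible representation of `K` on the same space whose restriction to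
`G` equals `ρ`. -/
theorem irreducible_extends_of_sup_center_eq_top (K : Type) [Group K] [Fintype K]
    (G : Subgroup K) (hK : G ⊔ Subgroup.center K = ⊤)
    (V : Type) [AddCommGroup V] [Module ℂ V] [FiniteDimensional ℂ V]
    (ρ : Representation ℂ ↥G V) (hρ : ρ.IsIrred) :
    ∃ ρK : Representation ℂ K V, ρK.IsIrred ∧ ∀ g : ↥G, ρK (g : K) = ρ g := by
  let D : Subgroup (center K) := G.subgroupOf (center K)
  let ι : D →* G := ((center K).subtype.comp D.subtype).codRestrict G fun d => d.2
  obtain ⟨μ, hμ⟩ := hρ.exists_monoidHom_eq_algebraMap ι fun d g =>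
    Subtype.ext (mem_center_iff.mp (d : center K).2 g).symm
  -- the `CommGroup` structure on `center K` comes from the scoped `IsMulCommutative` instances
  obtain ⟨ω, hω⟩ := open scoped IsMulCommutative in MonoidHom.domRestrict_surjective ℂ D μ
  let χ : center K →* Module.End ℂ V :=
    (algebraMap ℂ (Module.End ℂ V) : ℂ →* Module.End ℂ V).comp ((Units.coeHom ℂ).comp ω)
  obtain ⟨ρK, hρK⟩ := MonoidHom.exists_extend_of_sup_center_eq_top hK ρ χ
    (fun g z => Algebra.commute_algebraMap_right (ω z : ℂ) (ρ g)) fun g z hgz => by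
      let d : D := ⟨z, mem_subgroupOf.mpr (hgz ▸ g.2)⟩
      have hd : ι d = g := Subtype.ext hgz.symm
      have hωd : ω z = μ d := by simpa using DFunLike.congr_fun hω d
      rw [← hd, hμ, ← hωd]
      rfl
  have hres : ρK.comp G.subtype = ρ := MonoidHom.ext hρK
  exact ⟨ρK, .of_comp G.subtype (hres ▸ hρ), hρK⟩
end
end

section
/- Let G be a finite group with irreducible 2-dimensional representations φᵢ (i ≥ 0, with φ₀ = ρ the defining representation of determinant δ) satisfying φᵢ ⊗ ρ ≅ δ(φ_{i-1} ⊕ φ_{i+1}) for all i in range. Let m ≥ 1 be minimal with δᵐφᵢ ≅ φᵢ and k ≥ 1 minimal with δᵏφ_{i+1} ≅ φ_{i+1}. Then m = k; i.e., consecutive representations in the chain have δ-orbits of equal size. -/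
open Matrix

noncomputable section

/-- A matrix representation is irreducible if the only invariant subspaces of `ℂⁿ`
are `⊥` and `⊤`. -/
def MatRep.IsIrred {G : Type*} [Group G] {n : ℕ}
    (ρ : G →* Matrix.GeneralLinearGroup (Fin n) ℂ) : Prop :=
  ∀ p : Submodule ℂ (Fin n → ℂ),
    (∀ g : G, ∀ v ∈ p, Matrix.mulVec (ρ g : Matrix (Fin n) (Fin n) ℂ) v ∈ p) →
      p = ⊥ ∨ p = ⊤

/-- `δᵏ ⊗ ψ ≅ ψ` for a one-dimensional character `δ` and a 2-dimensional
representation `ψ`. -/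
def TwistIsoBy {G : Type*} [Group G] (δ : G →* ℂˣ)
    (ψ : G →* Matrix.GeneralLinearGroup (Fin 2) ℂ) (k : ℕ) : Prop :=
  ∃ P : Matrix.GeneralLinearGroup (Fin 2) ℂ, ∀ g : G,
    ((P * ψ g * P⁻¹ : Matrix.GeneralLinearGroup (Fin 2) ℂ) : Matrix (Fin 2) (Fin 2) ℂ)
      = ((δ g : ℂ)) ^ k • (ψ g : Matrix (Fin 2) (Fin 2) ℂ)

/-- Character of a 2-dimensional matrix representation. -/
def chr {G : Type*} [Group G] (ψ : G →* Matrix.GeneralLinearGroup (Fin 2) ℂ) (g : G) : ℂ :=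
  Matrix.trace (ψ g : Matrix (Fin 2) (Fin 2) ℂ)


/-!
If `δᵏφᵢ₊₁ ≅ φᵢ₊₁`, twisting the decomposition `φᵢ₊₁ ⊗ ρ ≅ δφᵢ ⊕ δφᵢ₊₂` by `δᵏ` shows that
`χ(φᵢ) + χ(φᵢ₊₂)` is fixed by multiplication with `δᵏ`. Since `φᵢ` is orthogonal to every
twist of `φᵢ₊₂`, this gives `⟨δᵏχ(φᵢ), χ(φᵢ)⟩ = ⟨χ(φᵢ), χ(φᵢ)⟩ = 1`, and a nonzero pairing of
characters forces `δᵏφᵢ ≅ φᵢ` by Schur's lemma, applied to a `δᵏ`-twisted average of a matrix.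
Symmetrically `δᵐφᵢ ≅ φᵢ` implies `δᵐφᵢ₊₁ ≅ φᵢ₊₁`, so the minimal periods agree.
-/

theorem Matrix.mul_single_one_mul_apply {R m : Type*} [Semiring R] [Fintype m] [DecidableEq m]
    (A B : Matrix m m R) (a b : m) :
    (A * single a b 1 * B : Matrix m m R) a b = A a a * B b b := by
  simp [mul_apply, single, ite_and]

namespace MatRep

section Schur

variable {G : Type*} [Group G] {n : ℕ} {ψ : G →* GeneralLinearGroup (Fin n) ℂ}

theorem IsIrred.isUnit_or_eq_zero (hψ : IsIrred ψ) {w : G → ℂ} {M : Matrix (Fin n) (Fin n) ℂ}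
    (hM : ∀ g, M * (ψ g : Matrix (Fin n) (Fin n) ℂ) = w g • ((ψ g : Matrix _ _ ℂ) * M)) :
    IsUnit M ∨ M = 0 := by
  have hinv : ∀ g, ∀ v ∈ LinearMap.ker M.mulVecLin,
      (ψ g : Matrix (Fin n) (Fin n) ℂ) *ᵥ v ∈ LinearMap.ker M.mulVecLin := by
    intro g v hv
    simp only [LinearMap.mem_ker, mulVecLin_apply] at hv ⊢
    rw [mulVec_mulVec, hM, smul_mulVec, ← mulVec_mulVec, hv, mulVec_zero, smul_zero]
  rcases hψ _ hinv with hker | hker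
  · exact .inl (mulVec_injective_iff_isUnit.mp (LinearMap.ker_eq_bot.mp hker))
  · exact .inr (toLin'.injective ((LinearMap.ker_eq_top.mp hker).trans (map_zero _).symm))

theorem IsIrred.exists_eq_smul_one [NeZero n] (hψ : IsIrred ψ) {M : Matrix (Fin n) (Fin n) ℂ}
    (hM : ∀ g, M * (ψ g : Matrix (Fin n) (Fin n) ℂ) = (ψ g : Matrix _ _ ℂ) * M) :
    ∃ c : ℂ, M = c • 1 := by
  obtain ⟨c, hc⟩ := Module.End.exists_eigenvalue M.mulVecLin
  obtain ⟨v, hv⟩ := hc.exists_hasEigenvector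
  refine ⟨c, sub_eq_zero.mp ((hψ.isUnit_or_eq_zero (w := 1) fun g => ?_).resolve_left ?_)⟩
  · simp only [Pi.one_apply, one_smul, Matrix.sub_mul, Matrix.mul_sub, hM, smul_mul,
      Matrix.mul_smul, Matrix.one_mul, Matrix.mul_one]
  · rw [← mulVec_injective_iff_isUnit]
    intro hinj
    refine hv.2 (hinj ?_)
    have hMv : M *ᵥ v = c • v := hv.apply_eq_smul
    rw [sub_mulVec, hMv, smul_mulVec, one_mulVec, sub_self, mulVec_zero]

end Schur

section TwistedAverage

variable {G : Type*} [Group G] [Fintype G] {n : ℕ} (ψ : G →* GeneralLinearGroup (Fin n) ℂ)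

def twistedAvg (w : G →* ℂ) (A : Matrix (Fin n) (Fin n) ℂ) : Matrix (Fin n) (Fin n) ℂ :=
  ∑ g, w g • ((ψ g : Matrix (Fin n) (Fin n) ℂ) * A * (ψ g⁻¹ : Matrix _ _ ℂ))

theorem twistedAvg_mul (w : G →* ℂ) (A : Matrix (Fin n) (Fin n) ℂ) (h : G) :
    twistedAvg ψ w A * (ψ h : Matrix (Fin n) (Fin n) ℂ)
      = w h • ((ψ h : Matrix (Fin n) (Fin n) ℂ) * twistedAvg ψ w A) := by
  rw [twistedAvg, Finset.sum_mul, Finset.mul_sum, Finset.smul_sum]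
  refine Fintype.sum_equiv (Equiv.mulLeft h⁻¹) _ _ fun g => ?_
  have hg : g = h * (h⁻¹ * g) := (mul_inv_cancel_left h g).symm
  have hψg : (ψ g : Matrix (Fin n) (Fin n) ℂ) = ψ h * ψ (h⁻¹ * g) := by
    rw [← Units.val_mul, ← map_mul, ← hg]
  have hψg' : (ψ g⁻¹ : Matrix (Fin n) (Fin n) ℂ) * ψ h = ψ (h⁻¹ * g)⁻¹ := by
    rw [← Units.val_mul, ← map_mul, _root_.mul_inv_rev, inv_inv]
  simp only [Equiv.coe_mulLeft, smul_mul, Matrix.mul_assoc, hψg', hψg]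
  rw [Matrix.mul_smul, smul_smul, ← map_mul, ← hg]

theorem sum_twistedAvg_single_apply (w : G →* ℂ) :
    ∑ a, ∑ b, twistedAvg ψ w (single a b 1) a b
      = ∑ g, w g * (trace (ψ g : Matrix (Fin n) (Fin n) ℂ)
          * trace (ψ g⁻¹ : Matrix (Fin n) (Fin n) ℂ)) := by
  simp only [twistedAvg, Matrix.sum_apply, Matrix.smul_apply, smul_eq_mul,
    mul_single_one_mul_apply, trace, diag, Finset.mul_sum, Finset.sum_mul]
  exact Finset.sum_comm.trans
    ((Finset.sum_congr rfl fun _ _ => Finset.sum_comm).trans Finset.sum_comm)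

theorem trace_twistedAvg_one (A : Matrix (Fin n) (Fin n) ℂ) :
    trace (twistedAvg ψ 1 A) = Fintype.card G * trace A := by
  simp only [twistedAvg, MonoidHom.one_apply, one_smul, trace_sum, trace_mul_cycle,
    ← Units.val_mul, ← map_mul, inv_mul_cancel, map_one, Units.val_one, Matrix.one_mul,
    Finset.sum_const, Finset.card_univ, nsmul_eq_mul]

variable {ψ}

theorem IsIrred.sum_trace_mul_trace_inv [NeZero n] (hψ : IsIrred ψ) :
    ∑ g, trace (ψ g : Matrix (Fin n) (Fin n) ℂ) * trace (ψ g⁻¹ : Matrix (Fin n) (Fin n) ℂ)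
      = Fintype.card G := by
  have hscalar : ∀ a b, ∃ c : ℂ, twistedAvg ψ 1 (single a b 1) = c • 1 := fun a b =>
    hψ.exists_eq_smul_one fun g => by simpa using twistedAvg_mul ψ 1 (single a b 1) g
  choose c hc using hscalar
  -- Taking traces pins down the scalar: `n * c a b = |G| * trace (single a b 1)`.
  have hentry : ∀ a b, (n : ℂ) * twistedAvg ψ 1 (single a b 1) a b
      = Fintype.card G * (1 : Matrix (Fin n) (Fin n) ℂ) a b := by
    intro a b
    have htr := trace_twistedAvg_one ψ (single a b (1 : ℂ))
    rw [hc, trace_smul, trace_one, Fintype.card_fin, smul_eq_mul] at htr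
    rw [hc, Matrix.smul_apply, one_apply, smul_eq_mul]
    by_cases hab : a = b
    · subst hab
      simpa [trace_single_eq_same, mul_comm] using htr
    · simp [hab]
  have hsum := sum_twistedAvg_single_apply ψ 1
  simp only [MonoidHom.one_apply, one_mul] at hsum
  rw [← hsum]
  apply mul_left_cancel₀ (Nat.cast_ne_zero.mpr (NeZero.ne n) : (n : ℂ) ≠ 0)
  simp only [Finset.mul_sum, hentry, one_apply, mul_ite, mul_one, mul_zero, Finset.sum_ite_eq,
    Finset.mem_univ, if_true, Finset.sum_const, Finset.card_univ, Fintype.card_fin, nsmul_eq_mul]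

theorem IsIrred.exists_conj_eq_smul (hψ : IsIrred ψ) (w : G →* ℂ)
    (hw : ∑ g, w g * (trace (ψ g : Matrix (Fin n) (Fin n) ℂ)
      * trace (ψ g⁻¹ : Matrix (Fin n) (Fin n) ℂ)) ≠ 0) :
    ∃ P : GeneralLinearGroup (Fin n) ℂ, ∀ g,
      ((P * ψ g * P⁻¹ : GeneralLinearGroup (Fin n) ℂ) : Matrix (Fin n) (Fin n) ℂ)
        = w g • (ψ g : Matrix (Fin n) (Fin n) ℂ) := by
  obtain ⟨a, b, hne⟩ : ∃ a b, twistedAvg ψ w (single a b 1) ≠ 0 := by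
    by_contra! h
    rw [← sum_twistedAvg_single_apply] at hw
    simp [h] at hw
  have hM := twistedAvg_mul ψ w (single a b 1)
  obtain ⟨P, hP⟩ := (hψ.isUnit_or_eq_zero hM).resolve_right hne
  refine ⟨P, fun g => ?_⟩
  rw [Units.val_mul, Units.val_mul, hP, hM, smul_mul, Matrix.mul_assoc, ← hP, Units.mul_inv,
    Matrix.mul_one]

end TwistedAverage

end MatRep

section Twist

variable {G : Type*} [Group G] {δ : G →* ℂˣ} {ψ : G →* GeneralLinearGroup (Fin 2) ℂ} {k : ℕ}

theorem TwistIsoBy.pow_mul_chr (h : TwistIsoBy δ ψ k) (g : G) :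
    (δ g : ℂ) ^ k * chr ψ g = chr ψ g := by
  obtain ⟨P, hP⟩ := h
  have htr := congrArg trace (hP g)
  rw [Units.val_mul, Units.val_mul, trace_mul_cycle, Units.inv_mul, Matrix.one_mul,
    trace_smul, smul_eq_mul] at htr
  exact htr.symm

theorem TwistIsoBy.of_chr_mul_chr_eq [Fintype G] {ρ ψ' ψ'' : G →* GeneralLinearGroup (Fin 2) ℂ}
    (hψ : TwistIsoBy δ ψ k) (hψ' : MatRep.IsIrred ψ')
    (hrec : ∀ g, chr ψ g * chr ρ g = δ g * (chr ψ' g + chr ψ'' g))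
    (horth : ∀ j : ℤ, (Fintype.card G : ℂ)⁻¹ *
        ∑ g, chr ψ' g * (((δ g⁻¹ : ℂˣ) ^ j : ℂˣ) * chr ψ'' g⁻¹) = 0) :
    TwistIsoBy δ ψ' k := by
  have hcard : (Fintype.card G : ℂ) ≠ 0 := Nat.cast_ne_zero.mpr Fintype.card_ne_zero
  have hfix : ∀ g, (δ g : ℂ) ^ k * (chr ψ' g + chr ψ'' g) = chr ψ' g + chr ψ'' g := fun g =>
    mul_left_cancel₀ (δ g).ne_zero <| by
      linear_combination chr ρ g * hψ.pow_mul_chr g - ((δ g : ℂ) ^ k - 1) * hrec g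
  have horth' : ∀ j : ℕ, ∑ g, (δ g : ℂ) ^ j * chr ψ'' g * chr ψ' g⁻¹ = 0 := by
    intro j
    rw [← (mul_eq_zero.mp (horth j)).resolve_left (inv_ne_zero hcard)]
    refine Fintype.sum_equiv (Equiv.inv G) _ _ fun g => ?_
    simp only [Equiv.inv_apply, inv_inv, zpow_natCast, Units.val_pow_eq_pow_val]
    ring
  have hpair : ∑ g, (δ g : ℂ) ^ k * (chr ψ' g * chr ψ' g⁻¹) = Fintype.card G := calc
    _ = ∑ g, (chr ψ' g * chr ψ' g⁻¹ + (δ g : ℂ) ^ 0 * chr ψ'' g * chr ψ' g⁻¹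
          - (δ g : ℂ) ^ k * chr ψ'' g * chr ψ' g⁻¹) :=
      Finset.sum_congr rfl fun g _ => by linear_combination chr ψ' g⁻¹ * hfix g
    _ = Fintype.card G := by
      rw [Finset.sum_sub_distrib, Finset.sum_add_distrib, horth', horth', add_zero, sub_zero]
      exact hψ'.sum_trace_mul_trace_inv
  exact hψ'.exists_conj_eq_smul ((powMonoidHom k).comp ((Units.coeHom ℂ).comp δ))
    (hpair ▸ hcard)

end Twist

theorem delta_orbits_of_consecutive_have_equal_size_general
    (G : Type) [Group G] [Fintype G]
    (ρ φim φi φip φipp : G →* Matrix.GeneralLinearGroup (Fin 2) ℂ)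
    (δ : G →* ℂˣ)
    (hirri : MatRep.IsIrred φi) (hirrip : MatRep.IsIrred φip)
    (h1 : ∀ g : G, chr φi g * chr ρ g = (δ g : ℂ) * (chr φim g + chr φip g))
    (h2 : ∀ g : G, chr φip g * chr ρ g = (δ g : ℂ) * (chr φi g + chr φipp g))
    (h3 : ∀ j : ℤ, (Fintype.card G : ℂ)⁻¹ *
        ∑ g : G, chr φi g * (((δ g⁻¹ : ℂˣ) ^ j : ℂˣ) * chr φipp g⁻¹) = 0)
    (h4 : ∀ j : ℤ, (Fintype.card G : ℂ)⁻¹ *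
        ∑ g : G, chr φip g * (((δ g⁻¹ : ℂˣ) ^ j : ℂˣ) * chr φim g⁻¹) = 0)
    (m k : ℕ) (hm1 : 1 ≤ m) (hk1 : 1 ≤ k)
    (hmiso : TwistIsoBy δ φi m)
    (hmmin : ∀ m' : ℕ, 1 ≤ m' → m' < m → ¬ TwistIsoBy δ φi m')
    (hkiso : TwistIsoBy δ φip k)
    (hkmin : ∀ k' : ℕ, 1 ≤ k' → k' < k → ¬ TwistIsoBy δ φip k') :
    m = k := by
  have hki : TwistIsoBy δ φi k := hkiso.of_chr_mul_chr_eq hirri h2 h3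
  have hmip : TwistIsoBy δ φip m :=
    hmiso.of_chr_mul_chr_eq hirrip (fun g => by rw [h1 g, add_comm]) h4
  exact le_antisymm (not_lt.mp fun h => hmmin k hk1 h hki) (not_lt.mp fun h => hkmin m hm1 h hmip)

/-- Let `G` be a finite group with a chain of irreducible 2-dimensional
representations `… φᵢ₋₁, φᵢ, φᵢ₊₁, φᵢ₊₂ …` (with `φ₀ = ρ` the defining representation of
determinant character `δ`), satisfying the recursion `φⱼ ⊗ ρ ≅ δφⱼ₋₁ ⊕ δφⱼ₊₁` at the
indices `i` and `i+1`, and such that `(φᵢ, δʲφᵢ₊₂) = 0` and `(φᵢ₊₁, δʲφᵢ₋₁) = 0` for all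
`j ∈ ℤ`.  If `m ≥ 1` is minimal with `δᵐφᵢ ≅ φᵢ` and `k ≥ 1` is minimal with
`δᵏφᵢ₊₁ ≅ φᵢ₊₁`, then `m = k`: consecutive members of the chain have `δ`-orbits of equal
size. -/
theorem delta_orbits_of_consecutive_have_equal_size
    (G : Type) [Group G] [Fintype G]
    (ρ φim φi φip φipp : G →* Matrix.GeneralLinearGroup (Fin 2) ℂ)
    (δ : G →* ℂˣ)
    (hdet : ∀ g : G, (δ g : ℂ) = ((ρ g : Matrix (Fin 2) (Fin 2) ℂ)).det)
    (hirri : MatRep.IsIrred φi) (hirrip : MatRep.IsIrred φip)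
    (h1 : ∀ g : G, chr φi g * chr ρ g = (δ g : ℂ) * (chr φim g + chr φip g))
    (h2 : ∀ g : G, chr φip g * chr ρ g = (δ g : ℂ) * (chr φi g + chr φipp g))
    (h3 : ∀ j : ℤ, (Fintype.card G : ℂ)⁻¹ *
        ∑ g : G, chr φi g * (((δ g⁻¹ : ℂˣ) ^ j : ℂˣ) * chr φipp g⁻¹) = 0)
    (h4 : ∀ j : ℤ, (Fintype.card G : ℂ)⁻¹ *
        ∑ g : G, chr φip g * (((δ g⁻¹ : ℂˣ) ^ j : ℂˣ) * chr φim g⁻¹) = 0)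
    (m k : ℕ) (hm1 : 1 ≤ m) (hk1 : 1 ≤ k)
    (hmiso : TwistIsoBy δ φi m)
    (hmmin : ∀ m' : ℕ, 1 ≤ m' → m' < m → ¬ TwistIsoBy δ φi m')
    (hkiso : TwistIsoBy δ φip k)
    (hkmin : ∀ k' : ℕ, 1 ≤ k' → k' < k → ¬ TwistIsoBy δ φip k') :
    m = k :=
  delta_orbits_of_consecutive_have_equal_size_general G ρ φim φi φip φipp δ hirri hirrip h1 h2 h3 h4
    m k hm1 hk1 hmiso hmmin hkiso hkmin
end
end

section
/- Let G = Cₘ × D₂ₙ ≤ SL₃(ℂ) with m ≥ 3 odd, where Cₘ is embedded as the diagonal matrices diag(εₘ, εₘ, εₘ⁻²) and D₂ₙ of odd degree n acts on the first two coordinates. Then the skew-group algebra ℂ[x₁,x₂,x₃] ∗ G admits a 3-preprojective cut. -/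
open Matrix

noncomputable section

/-- The standard inner product of two class functions / characters of a finite group:
`(α, β) = |G|⁻¹ ∑ α(g) β(g⁻¹)`. -/
def charInner (G : Type*) [Group G] [Fintype G] (α β : G → ℂ) : ℂ :=
  (Fintype.card G : ℂ)⁻¹ * ∑ g : G, α g * β g⁻¹

/-- `χ : G → ℂ` is an irreducible character: the character of some irreducible
matrix representation. -/
def IsIrredChar (G : Type*) [Group G] (χ : G → ℂ) : Prop :=
  ∃ (n : ℕ) (σ : G →* Matrix.GeneralLinearGroup (Fin n) ℂ), MatRep.IsIrred σ ∧
    ∀ g : G, χ g = Matrix.trace (σ g : Matrix (Fin n) (Fin n) ℂ)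

/-- The McKay quiver of a finite group `G` with respect to a representation
`ρ : G →* GL₃(ℂ)`: vertices are (indexed by) the irreducible characters of `G`, and the
number of arrows from `χ_v` to `χ_w` is the multiplicity `(χ_v, χ_w · χ_ρ)`. -/
structure McKayQuiver (G : Type*) [Group G] [Fintype G]
    (ρ : G →* Matrix.GeneralLinearGroup (Fin 3) ℂ) where
  vert : Type
  [instFintypeVert : Fintype vert]
  ch : vert → G → ℂ
  ch_irred : ∀ v, IsIrredChar G (ch v)
  ch_inj : Function.Injective ch
  ch_surj : ∀ χ : G → ℂ, IsIrredChar G χ → ∃ v, ch v = χ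
  arr : vert → vert → ℕ
  arr_spec : ∀ v w, (arr v w : ℂ)
    = charInner G (ch v)
        (fun g => ch w g * Matrix.trace (ρ g : Matrix (Fin 3) (Fin 3) ℂ))

attribute [instance] McKayQuiver.instFintypeVert

namespace McKayQuiver

variable {G : Type*} [Group G] [Fintype G]
  {ρ : G →* Matrix.GeneralLinearGroup (Fin 3) ℂ}

/-- The McKay quiver has a loop. -/
def HasLoop (Q : McKayQuiver G ρ) : Prop := ∃ v, 1 ≤ Q.arr v v

/-- A `3`-preprojective cut of the McKay quiver: an assignment of degrees `0` and `1`
to the arrows such that every `3`-cycle is homogeneous of total degree `1` and the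
subquiver of degree-`0` arrows is acyclic (so that the degree-`0` part of the algebra
is finite dimensional). -/
def IsCut (Q : McKayQuiver G ρ) (d : ∀ v w : Q.vert, Fin (Q.arr v w) → ℕ) : Prop :=
  (∀ v w (a : Fin (Q.arr v w)), d v w a ≤ 1) ∧
  (∀ (x y z : Q.vert) (a : Fin (Q.arr x y)) (b : Fin (Q.arr y z)) (c : Fin (Q.arr z x)),
      d x y a + d y z b + d z x c = 1) ∧
  ¬ ∃ f : ℕ → Q.vert, ∀ i : ℕ, ∃ a : Fin (Q.arr (f i) (f (i + 1))), d (f i) (f (i + 1)) a = 0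

/-- The skew-group algebra `ℂ[x₁,x₂,x₃] ∗ G ≃ ℂQ_G/I` admits a `3`-preprojective cut. -/
def HasCut (Q : McKayQuiver G ρ) : Prop := ∃ d, Q.IsCut d

end McKayQuiver

/-!
The generator `c` of `Cₘ` is central, so by Schur's lemma it acts on every irreducible
representation `V` by a scalar `ε ^ κ(V)`, which defines a weight `κ(V) ∈ ℤ/m`. Since
`ρ(c) = diag(ε, ε, ε⁻²)`, an arrow `V → W` of the McKay quiver changes the weight by `-1` or `+2`.
Giving an arrow degree `0` exactly when it lowers the representative of the weight in `[0, m)`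
is a cut: the integer changes along a `3`-cycle lie in `{-1, m - 1, 2, 2 - m}` and sum to `0`,
which for odd `m ≥ 3` forces exactly one of them to be positive, and paths of degree `0`
strictly decrease the weight. This is the cut of type `(1, 1, m - 2)` of `R ∗ Cₘ`, lifted to `G`.
-/

theorem MatRep.IsIrred.exists_eq_smul_one_of_commute {H : Type*} [Group H] {k : ℕ}
    {σ : H →* GL (Fin k) ℂ} (hσ : MatRep.IsIrred σ) {c : H} (hc : ∀ g, Commute c g) :
    ∃ ω : ℂ, (σ c : Matrix (Fin k) (Fin k) ℂ) = ω • 1 := by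
  rcases isEmpty_or_nonempty (Fin k) with _ | _
  · exact ⟨1, Subsingleton.elim _ _⟩
  set f : Module.End ℂ (Fin k → ℂ) := Matrix.toLin' (σ c : Matrix (Fin k) (Fin k) ℂ)
  obtain ⟨ω, hω⟩ := Module.End.exists_eigenvalue f
  have hinv (g : H) (v) (hv : v ∈ f.eigenspace ω) :
      (σ g : Matrix (Fin k) (Fin k) ℂ) *ᵥ v ∈ f.eigenspace ω := by
    have hcomm : Commute f (Matrix.toLin' (σ g : Matrix (Fin k) (Fin k) ℂ)) :=
      ((hc g).map σ).units_val.map Matrix.toLinAlgEquiv'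
    simpa using Module.End.mapsTo_genEigenspace_of_comm hcomm ω 1 hv
  refine ⟨ω, Matrix.toLin'.injective (LinearMap.ext fun v ↦ ?_)⟩
  rcases hσ _ hinv with h | h
  · exact absurd h (Module.End.hasEigenvalue_iff.mp hω)
  · have hv : v ∈ f.eigenspace ω := h ▸ Submodule.mem_top
    simpa [f] using Module.End.mem_eigenspace_iff.mp hv

theorem IsIrredChar.exists_central_char {G : Type*} [Group G] {χ : G → ℂ}
    (hχ : IsIrredChar G χ) {c : G} (hc : ∀ g, Commute c g) {m : ℕ} (hcm : c ^ m = 1) :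
    ∃ ω : ℂ, ω ^ m = 1 ∧ ∀ g, χ (c * g) = ω * χ g := by
  obtain ⟨k, σ, hσ, hχσ⟩ := hχ
  obtain rfl : χ = fun g ↦ Matrix.trace (σ g : Matrix (Fin k) (Fin k) ℂ) := funext hχσ
  obtain ⟨ω, hω⟩ := hσ.exists_eq_smul_one_of_commute hc
  rcases Nat.eq_zero_or_pos k with rfl | hk
  · exact ⟨1, one_pow m, fun g ↦ by simp⟩
  refine ⟨ω, ?_, fun g ↦ by simp [hω, Matrix.trace_smul]⟩
  have hpow : (ω • 1 : Matrix (Fin k) (Fin k) ℂ) ^ m = 1 := by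
    rw [← hω, ← Units.val_pow_eq_pow_val, ← map_pow, hcm, map_one, Units.val_one]
  rw [smul_pow, one_pow] at hpow
  simpa using congrFun (congrFun hpow ⟨0, hk⟩) ⟨0, hk⟩

section charInner

variable {G : Type*} [Group G] [Fintype G]

theorem charInner_sum_right {ι : Type*} (s : Finset ι) (α : G → ℂ) (β : ι → G → ℂ) :
    charInner G α (fun g ↦ ∑ i ∈ s, β i g) = ∑ i ∈ s, charInner G α (β i) := by
  simp only [charInner, Finset.mul_sum]
  exact Finset.sum_comm

theorem charInner_eq_zero_of_central_ne {c : G} (hc : ∀ g, Commute c g) {α β : G → ℂ}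
    {a b : ℂ} (hα : ∀ g, α (c * g) = a * α g) (hβ : ∀ g, β (c * g) = b * β g) (hab : a ≠ b) :
    charInner G α β = 0 := by
  refine mul_eq_zero_of_right _ ?_
  set S := ∑ g, α g * β g⁻¹
  have hshift : b * S = a * S := calc
    b * S = ∑ g, α (c * g) * (b * β (c * g)⁻¹) := by
      rw [Finset.mul_sum, ← Equiv.sum_comp (Equiv.mulLeft c)]
      exact Finset.sum_congr rfl fun g _ ↦ by simp only [Equiv.coe_mulLeft]; ring
    _ = a * S := by
      rw [Finset.mul_sum]
      refine Finset.sum_congr rfl fun g _ ↦ ?_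
      rw [hα, ← hβ, _root_.mul_inv_rev, ← mul_assoc, (hc g⁻¹).eq, mul_inv_cancel_right]
      ring
  rcases mul_eq_zero.mp (show (b - a) * S = 0 by rw [sub_mul, hshift, sub_self]) with h | h
  · exact absurd (sub_eq_zero.mp h).symm hab
  · exact h

end charInner

theorem ZMod.val_add_natCast_eq_or {m : ℕ} [NeZero m] (a : ZMod m) {k : ℕ} (hk : k < m) :
    (a + k).val = a.val + k ∨ (a + k).val + m = a.val + k := by
  have hkval : (k : ZMod m).val = k := ZMod.val_cast_of_lt hk
  rcases lt_or_ge (a.val + (k : ZMod m).val) m with h | h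
  · exact .inl (by rw [ZMod.val_add_of_lt h, hkval])
  · exact .inr (by rw [← ZMod.val_add_val_of_le h, hkval])

theorem IsPrimitiveRoot.pow_eq_pow_iff_natCast_eq {M : Type*} [CommMonoid M] {ζ : M} {k : ℕ}
    [NeZero k] (h : IsPrimitiveRoot ζ k) {a b : ℕ} : ζ ^ a = ζ ^ b ↔ (a : ZMod k) = b := by
  rw [(h.isOfFinOrder (NeZero.ne k)).pow_eq_pow_iff_modEq, ← h.eq_orderOf,
    ZMod.natCast_eq_natCast_iff]

namespace McKayQuiver

variable {G : Type*} [Group G] [Fintype G] {ρ : G →* GL (Fin 3) ℂ}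

theorem exists_eq_mul_of_arr_ne_zero (Q : McKayQuiver G ρ) {c : G} (hc : ∀ g, Commute c g)
    {d : Fin 3 → ℂ} (hρc : (ρ c : Matrix (Fin 3) (Fin 3) ℂ) = Matrix.diagonal d)
    {v w : Q.vert} {a b : ℂ} (hv : ∀ g, Q.ch v (c * g) = a * Q.ch v g)
    (hw : ∀ g, Q.ch w (c * g) = b * Q.ch w g) (harr : Q.arr v w ≠ 0) :
    ∃ i, a = b * d i := by
  by_contra! h
  have htrace : (fun g ↦ Q.ch w g * Matrix.trace (ρ g : Matrix (Fin 3) (Fin 3) ℂ))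
      = fun g ↦ ∑ i, Q.ch w g * (ρ g : Matrix (Fin 3) (Fin 3) ℂ) i i := by
    simp only [Matrix.trace, Matrix.diag, Finset.mul_sum]
  have hshift (i : Fin 3) (g : G) : Q.ch w (c * g) * (ρ (c * g) : Matrix (Fin 3) (Fin 3) ℂ) i i
      = b * d i * (Q.ch w g * (ρ g : Matrix (Fin 3) (Fin 3) ℂ) i i) := by
    rw [map_mul, Units.val_mul, hρc, Matrix.diagonal_mul, hw]
    ring
  have hzero : (Q.arr v w : ℂ) = 0 := by
    rw [Q.arr_spec, htrace, charInner_sum_right]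
    exact Finset.sum_eq_zero fun i _ ↦ charInner_eq_zero_of_central_ne hc hv (hshift i) (h i)
  exact harr (Nat.cast_eq_zero.mp hzero)

theorem isCut_of_weight (Q : McKayQuiver G ρ) {m : ℕ} (hm3 : 3 ≤ m) (hmodd : Odd m)
    (κ : Q.vert → ZMod m) (hκ : ∀ v w, Q.arr v w ≠ 0 → κ v = κ w + 1 ∨ κ w = κ v + 2) :
    Q.IsCut fun v w _ ↦ if (κ w).val < (κ v).val then 0 else 1 := by
  have : NeZero m := ⟨by omega⟩
  have hstep (v w : Q.vert) (h : Q.arr v w ≠ 0) :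
      (κ v).val = (κ w).val + 1 ∨ (κ v).val + m = (κ w).val + 1 ∨
        (κ w).val = (κ v).val + 2 ∨ (κ w).val + m = (κ v).val + 2 := by
    rcases hκ v w h with hvw | hvw
    · have := (κ w).val_add_natCast_eq_or (k := 1) (by omega)
      rw [Nat.cast_one, ← hvw] at this
      omega
    · have := (κ v).val_add_natCast_eq_or (k := 2) (by omega)
      rw [Nat.cast_ofNat, ← hvw] at this
      omega
  refine ⟨fun v w _ ↦ by dsimp only; split_ifs <;> omega, fun x y z a b c ↦ ?_, ?_⟩
  · -- Oddness of `m` excludes the `3`-cycle with weight steps `2, 2, 2 - m` when `m = 6`.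
    obtain ⟨t, ht⟩ := hmodd
    have := hstep x y a.pos.ne'
    have := hstep y z b.pos.ne'
    have := hstep z x c.pos.ne'
    have := (κ x).val_lt
    have := (κ y).val_lt
    have := (κ z).val_lt
    dsimp only
    split_ifs <;> omega
  · rintro ⟨f, hf⟩
    obtain ⟨i, hi⟩ := WellFounded.not_rel_apply_succ (r := (· < ·)) fun i ↦ (κ (f i)).val
    obtain ⟨a, ha⟩ := hf i
    exact hi (by simpa using ha)

theorem hasCut_of_central_diagonal (Q : McKayQuiver G ρ) {m : ℕ} (hm3 : 3 ≤ m) (hmodd : Odd m)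
    {ε : ℂ} (hε : IsPrimitiveRoot ε m) {c : G} (hc : ∀ g, Commute c g) (hcm : c ^ m = 1)
    (hρc : (ρ c : Matrix (Fin 3) (Fin 3) ℂ) = Matrix.diagonal ![ε, ε, (ε * ε)⁻¹]) :
    Q.HasCut := by
  have : NeZero m := ⟨by omega⟩
  choose ω hωm hω using fun v ↦ (Q.ch_irred v).exists_central_char hc hcm
  choose κ _ hκ using fun v ↦ hε.eq_pow_of_pow_eq_one (hωm v)
  refine ⟨_, Q.isCut_of_weight hm3 hmodd (fun v ↦ (κ v : ZMod m)) fun v w h ↦ ?_⟩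
  have hi := Q.exists_eq_mul_of_arr_ne_zero hc hρc (hω v) (hω w) h
  simp only [Fin.exists_fin_succ, Fin.exists_fin_zero, Matrix.cons_val_zero,
    Matrix.cons_val_succ, or_false, ← hκ] at hi
  rw [← or_assoc, or_self] at hi
  refine hi.imp (fun hi ↦ ?_) (fun hi ↦ ?_)
  · simpa using hε.pow_eq_pow_iff_natCast_eq.mp (hi.trans (pow_succ ε (κ w)).symm)
  · have : ε ^ (κ v + 2) = ε ^ κ w := by
      rw [pow_add, hi]
      field_simp [hε.ne_zero (NeZero.ne m)]
    simpa using (hε.pow_eq_pow_iff_natCast_eq.mp this).symm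

end McKayQuiver

theorem cyclic_times_dihedral_has_cut_general (m n : ℕ)
    (hm3 : 3 ≤ m) (hmodd : Odd m)
    (G : Type) [Group G] [Fintype G]
    (e : G ≃* Multiplicative (ZMod m) × DihedralGroup n)
    (ρ : G →* Matrix.GeneralLinearGroup (Fin 3) ℂ)
    (hc : ((ρ (e.symm (Multiplicative.ofAdd (1 : ZMod m), 1)) :
        Matrix (Fin 3) (Fin 3) ℂ))
      = Matrix.diagonal ![Complex.exp (2 * Real.pi * Complex.I / m),
          Complex.exp (2 * Real.pi * Complex.I / m),
          (Complex.exp (2 * Real.pi * Complex.I / m) *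
            Complex.exp (2 * Real.pi * Complex.I / m))⁻¹]) :
    ∀ Q : McKayQuiver G ρ, Q.HasCut := by
  intro Q
  set γ : Multiplicative (ZMod m) × DihedralGroup n := (Multiplicative.ofAdd 1, 1)
  have hγ_central (x) : Commute γ x := Prod.ext (mul_comm _ _) ((Commute.one_left x.2).eq)
  have hγ_pow : γ ^ m = 1 := Prod.ext (by simp [γ, ← ofAdd_nsmul]) (one_pow m)
  exact Q.hasCut_of_central_diagonal hm3 hmodd (Complex.isPrimitiveRoot_exp m (by omega))
    (fun g ↦ by simpa using (hγ_central (e g)).map e.symm) (by rw [← map_pow, hγ_pow, map_one]) hc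

/-- Let `G = Cₘ × D₂ₙ ≤ SL₃(ℂ)` with `m ≥ 3` odd, `n ≥ 3` odd, where `Cₘ` is
embedded as the diagonal matrices `diag(εₘ, εₘ, εₘ⁻²)` and the dihedral group `D₂ₙ` of odd
degree `n` acts on the first two coordinates (via `r ↦ diag(εₙ, εₙ⁻¹, 1)` and
`s ↦ antidiag(-1,-1) ⊕ (-1)`, i.e. the minimal group `H_{2n,1}` together with the inverse
determinant on the third coordinate).  Then the skew-group algebra
`ℂ[x₁,x₂,x₃] ∗ G ≃ ℂQ_G/I` admits a `3`-preprojective cut. -/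
theorem cyclic_times_dihedral_has_cut (m n : ℕ)
    (hm3 : 3 ≤ m) (hmodd : Odd m) (hn3 : 3 ≤ n) (hnodd : Odd n)
    (G : Type) [Group G] [Fintype G]
    (e : G ≃* Multiplicative (ZMod m) × DihedralGroup n)
    (ρ : G →* Matrix.GeneralLinearGroup (Fin 3) ℂ)
    (hfaith : Function.Injective ρ)
    (hc : ((ρ (e.symm (Multiplicative.ofAdd (1 : ZMod m), 1)) :
        Matrix (Fin 3) (Fin 3) ℂ))
      = Matrix.diagonal ![Complex.exp (2 * Real.pi * Complex.I / m),
          Complex.exp (2 * Real.pi * Complex.I / m),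
          (Complex.exp (2 * Real.pi * Complex.I / m) *
            Complex.exp (2 * Real.pi * Complex.I / m))⁻¹])
    (hr : ((ρ (e.symm (1, DihedralGroup.r 1)) : Matrix (Fin 3) (Fin 3) ℂ))
      = Matrix.diagonal ![Complex.exp (2 * Real.pi * Complex.I / n),
          (Complex.exp (2 * Real.pi * Complex.I / n))⁻¹, 1])
    (hs : ((ρ (e.symm (1, DihedralGroup.sr 0)) : Matrix (Fin 3) (Fin 3) ℂ))
      = !![0, -1, 0; -1, 0, 0; 0, 0, -1]) :
    ∀ Q : McKayQuiver G ρ, Q.HasCut :=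
  cyclic_times_dihedral_has_cut_general m n hm3 hmodd G e ρ hc
end
end

section
/- Let H ≤ PGL₂(ℂ) be finite and G ≤ GL₂(ℂ) finite with image H under the projection π : GL₂(ℂ) → PGL₂(ℂ). Then G is isoclinic to the binary group BH = π⁻¹(H) ∩ SL₂(ℂ): specifically, the group K = ⟨G, BH⟩ ≤ GL₂(ℂ) satisfies K = ⟨G, Z(K)⟩ = ⟨BH, Z(K)⟩. -/
open Matrix

noncomputable section

/-- The projection `π : GL₂(ℂ) → PGL₂(ℂ)`, realised as the quotient map by the centre
(the scalar matrices). -/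
def projPGL2 : Matrix.GeneralLinearGroup (Fin 2) ℂ →*
    Matrix.GeneralLinearGroup (Fin 2) ℂ ⧸ Subgroup.center (Matrix.GeneralLinearGroup (Fin 2) ℂ) :=
  QuotientGroup.mk' (Subgroup.center (Matrix.GeneralLinearGroup (Fin 2) ℂ))

/-- The image of `SL₂(ℂ)` inside `GL₂(ℂ)`. -/
def SL2sub : Subgroup (Matrix.GeneralLinearGroup (Fin 2) ℂ) :=
  (Matrix.SpecialLinearGroup.toGL
    (n := Fin 2) (R := ℂ)).range

local notation "GL2" => Matrix.GeneralLinearGroup (Fin 2) ℂ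

lemma aux_scalar_mem_center (l : ℂˣ) :
    Units.map (algebraMap ℂ (Matrix (Fin 2) (Fin 2) ℂ)).toMonoidHom l ∈
      Subgroup.center GL2 := by
  rw [Subgroup.mem_center_iff]
  intro g
  ext
  simp [Algebra.commutes]

lemma aux_mem_center_map {K : Subgroup GL2} {z : GL2}
    (hz : z ∈ Subgroup.center GL2) (hzK : z ∈ K) :
    z ∈ Subgroup.map K.subtype (Subgroup.center ↥K) := by
  refine ⟨⟨z, hzK⟩, Subgroup.mem_center_iff.mpr fun k => ?_, rfl⟩
  exact Subtype.ext (Subgroup.mem_center_iff.mp hz k)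

lemma aux_det_mem_SL2sub (s : GL2) (hs : Matrix.det (s : Matrix (Fin 2) (Fin 2) ℂ) = 1) :
    s ∈ SL2sub :=
  ⟨⟨(s : Matrix (Fin 2) (Fin 2) ℂ), hs⟩, Units.ext rfl⟩

lemma aux_proj_eq_of_center {a b : GL2} (h : a⁻¹ * b ∈ Subgroup.center GL2) :
    projPGL2 a = projPGL2 b := by
  simpa [projPGL2, QuotientGroup.mk'_apply] using QuotientGroup.eq.mpr h

/-- Let `G ≤ GL₂(ℂ)` be finite with image `H ≤ PGL₂(ℂ)` under the projection
`π`, and let `BH = π⁻¹(H) ∩ SL₂(ℂ)` be the binary version of `H`.  Then `G` and `BH` are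
isoclinic via the joint supergroup `K = ⟨G, BH⟩`: the group `K` satisfies
`K = ⟨G, Z(K)⟩ = ⟨BH, Z(K)⟩`, where `Z(K)` is viewed inside `GL₂(ℂ)` as the image of the
centre of `K` under the inclusion. -/
theorem isoclinic_to_binary_group
    (G : Subgroup (Matrix.GeneralLinearGroup (Fin 2) ℂ)) [Finite G]
    (BH : Subgroup (Matrix.GeneralLinearGroup (Fin 2) ℂ))
    (hBH : BH = (Subgroup.map projPGL2 G).comap projPGL2 ⊓ SL2sub)
    (K : Subgroup (Matrix.GeneralLinearGroup (Fin 2) ℂ)) (hK : K = G ⊔ BH) :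
    G ⊔ Subgroup.map K.subtype (Subgroup.center ↥K) = K ∧
    BH ⊔ Subgroup.map K.subtype (Subgroup.center ↥K) = K := by
  have hGK : G ≤ K := hK ▸ le_sup_left
  have hBHK : BH ≤ K := hK ▸ le_sup_right
  have hZK : Subgroup.map K.subtype (Subgroup.center ↥K) ≤ K := by
    rintro x ⟨y, -, rfl⟩; exact y.2
  -- every element of G is a central (scalar) multiple of an element of BH
  have keyG : ∀ g ∈ G, g ∈ BH ⊔ Subgroup.map K.subtype (Subgroup.center ↥K) := by
    intro g hg
    obtain ⟨l, hl⟩ := IsAlgClosed.exists_pow_nat_eq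
      (Matrix.det (g : Matrix (Fin 2) (Fin 2) ℂ)) (n := 2) two_pos
    have hl0 : l ≠ 0 := by
      intro h
      have hd : Matrix.det (g : Matrix (Fin 2) (Fin 2) ℂ) ≠ 0 :=
        ((Matrix.isUnit_iff_isUnit_det _).mp g.isUnit).ne_zero
      apply hd; rw [← hl, h]; ring
    set c : GL2 := Units.map (algebraMap ℂ (Matrix (Fin 2) (Fin 2) ℂ)).toMonoidHom
      (Units.mk0 l hl0) with hc
    have hcc : c ∈ Subgroup.center GL2 := aux_scalar_mem_center _
    have hcomm : g * c = c * g := Subgroup.mem_center_iff.mp hcc g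
    set s : GL2 := c⁻¹ * g with hsdef
    have hcinv : ((c⁻¹ : GL2) : Matrix (Fin 2) (Fin 2) ℂ)
        = l⁻¹ • (1 : Matrix (Fin 2) (Fin 2) ℂ) := by
      rw [hc, ← map_inv]
      simp [Algebra.algebraMap_eq_smul_one]
    have hdet : Matrix.det (s : Matrix (Fin 2) (Fin 2) ℂ) = 1 := by
      have : (s : Matrix (Fin 2) (Fin 2) ℂ)
          = ((c⁻¹ : GL2) : Matrix (Fin 2) (Fin 2) ℂ) * (g : Matrix (Fin 2) (Fin 2) ℂ) := rfl
      rw [this, Matrix.det_mul, hcinv, Matrix.det_smul, Matrix.det_one]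
      rw [Fintype.card_fin]
      field_simp [hl0]
      rw [← hl]
    have hsc : s⁻¹ * g = c := by
      calc s⁻¹ * g = g⁻¹ * (c * g) := by rw [hsdef]; group
        _ = g⁻¹ * (g * c) := by rw [hcomm]
        _ = c := by group
    have hsBH : s ∈ BH := by
      rw [hBH]
      refine ⟨?_, aux_det_mem_SL2sub s hdet⟩
      have hpr : projPGL2 s = projPGL2 g :=
        aux_proj_eq_of_center (by rw [hsc]; exact hcc)
      exact Subgroup.mem_comap.mpr (hpr ▸ ⟨g, hg, rfl⟩)
    have hcK : c ∈ K := by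
      rw [← hsc]
      exact mul_mem (inv_mem (hBHK hsBH)) (hGK hg)
    have hgsc : g = s * c := by
      calc g = c⁻¹ * (c * g) := by group
        _ = c⁻¹ * (g * c) := by rw [hcomm]
        _ = s * c := by rw [hsdef]; group
    rw [hgsc]
    exact mul_mem (Subgroup.mem_sup_left hsBH)
      (Subgroup.mem_sup_right (aux_mem_center_map hcc hcK))
  have keyBH : ∀ b ∈ BH, b ∈ G ⊔ Subgroup.map K.subtype (Subgroup.center ↥K) := by
    intro b hb
    have hb' := hb
    rw [hBH] at hb'
    obtain ⟨g, hg, hgb⟩ := Subgroup.mem_comap.mp hb'.1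
    have hz : g⁻¹ * b ∈ Subgroup.center GL2 :=
      QuotientGroup.eq.mp (by simpa [projPGL2, QuotientGroup.mk'_apply] using hgb)
    have hzK : g⁻¹ * b ∈ K := mul_mem (inv_mem (hGK hg)) (hBHK hb)
    have : b = g * (g⁻¹ * b) := by group
    rw [this]
    exact mul_mem (Subgroup.mem_sup_left hg)
      (Subgroup.mem_sup_right (aux_mem_center_map hz hzK))
  constructor
  · refine le_antisymm (sup_le hGK hZK) ?_
    conv_lhs => rw [hK]
    exact sup_le le_sup_left keyBH
  · refine le_antisymm (sup_le hBHK hZK) ?_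
    conv_lhs => rw [hK]
    exact sup_le keyG le_sup_left
end
end

section
/- Let G, H ≤ K be isoclinic finite groups (K = ⟨G, Z(K)⟩ = ⟨H, Z(K)⟩), and let ρ₁, ρ₂ be irreducible complex representations of G extending to representations ρ̂₁, ρ̂₂ of K. Then the multisets of dimensions of the irreducible summands of ρ₁ ⊗ ρ₂ and of (ρ̂₁|_H) ⊗ (ρ̂₂|_H) coincide. -/
/-!
Decompose `ρ̂₁ ⊗ ρ̂₂` into irreducible representations `U i` of `K`; its character restricts to
that of `ρ₁ ⊗ ρ₂` on `G` and to that of `(ρ̂₁|_H) ⊗ (ρ̂₂|_H)` on `H`. Since `K = G · Z(K)` and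
the centre acts on each `U i` by scalars (Schur), every `G`-invariant subspace of `U i` is
`K`-invariant, so `U i|_G` is still irreducible, and likewise `U i|_H`. Hence the families
`U i|_G` and `U i|_H` are decompositions of the two tensor products with matching dimensions.
-/

open CategoryTheory MonoidalCategory Representation Module Pointwise

universe u v

def Subrepresentation.orderIsoComp {k K G V : Type*} [Field k] [Monoid K] [Monoid G]
    [AddCommGroup V] [Module k V] (ρ : Representation k K V) (f : G →* K)
    (h : ∀ p : Submodule k V, (∀ g, ∀ v ∈ p, ρ (f g) v ∈ p) → ∀ x, ∀ v ∈ p, ρ x v ∈ p) :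
    Subrepresentation (ρ.comp f) ≃o Subrepresentation ρ where
  toFun p := ⟨p.toSubmodule, fun x _ hv => h _ (fun g _ hv => p.apply_mem_toSubmodule g hv) x _ hv⟩
  invFun p := ⟨p.toSubmodule, fun g _ hv => p.apply_mem_toSubmodule (f g) hv⟩
  left_inv _ := rfl
  right_inv _ := rfl
  map_rel_iff' := Iff.rfl

namespace Representation

section Center

variable {k K V : Type*} [Field k] [IsAlgClosed k] [Group K] [AddCommGroup V] [Module k V]
  [FiniteDimensional k V] (ρ : Representation k K V) [IsIrreducible ρ]

theorem IsIrreducible.exists_eq_smul_of_mem_center {z : K} (hz : z ∈ Subgroup.center K) :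
    ∃ c : k, ∀ v, ρ z v = c • v := by
  let φ : IntertwiningMap ρ ρ := (ρ z).intertwiningMap_of_isIntertwiningMap ρ ρ fun g v => by
    rw [← Module.End.mul_apply, ← map_mul, ← Module.End.mul_apply, ← map_mul,
      Subgroup.mem_center_iff.mp hz g]
  obtain ⟨c, hc⟩ := IsIrreducible.algebraMap_intertwiningMap_bijective_of_isAlgClosed.2 φ
  exact ⟨c, fun v => by simpa [φ] using (DFunLike.congr_fun hc v).symm⟩

theorem IsIrreducible.comp_subtype {G : Subgroup K} (hG : G ⊔ Subgroup.center K = ⊤) :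
    IsIrreducible (ρ.comp G.subtype) := by
  refine (Subrepresentation.orderIsoComp ρ G.subtype fun p hp x v hv => ?_).isSimpleOrder_iff.2 ‹_›
  obtain ⟨g, hg, z, hz, rfl⟩ : x ∈ (G : Set K) * (Subgroup.center K : Set K) := by
    rw [← Subgroup.mul_normal, hG]; trivial
  obtain ⟨c, hc⟩ := exists_eq_smul_of_mem_center ρ hz
  rw [map_mul, Module.End.mul_apply, hc]
  exact hp ⟨g, hg⟩ _ (p.smul_mem c hv)

end Center

section Decomposition

variable {k : Type u} {G : Type v} [Field k] [Group G]

theorem character_eq_add_of_isCompl {V : Type u} [AddCommGroup V] [Module k V]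
    [FiniteDimensional k V] (ρ : Representation k G V) {p q : Subrepresentation ρ}
    (hpq : IsCompl p q) (g : G) :
    ρ.character g = p.toRepresentation.character g + q.toRepresentation.character g := by
  have hpq' : IsCompl p.toSubmodule q.toSubmodule :=
    ⟨disjoint_iff.2 (congrArg Subrepresentation.toSubmodule hpq.inf_eq_bot),
      codisjoint_iff.2 (congrArg Subrepresentation.toSubmodule hpq.sup_eq_top)⟩
  let N : Bool → Submodule k V := fun b => if b then p.toSubmodule else q.toSubmodule
  have hN : DirectSum.IsInternal N := by
    rw [DirectSum.isInternal_submodule_iff_isCompl N (by decide : true ≠ false) ?_]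
    · simpa [N] using hpq'
    · ext b; cases b <;> simp
  have hmaps : ∀ b, Set.MapsTo (ρ g) (N b) (N b) := by
    rintro (_ | _) v hv
    exacts [q.apply_mem_toSubmodule g hv, p.apply_mem_toSubmodule g hv]
  rw [character, LinearMap.trace_eq_sum_trace_restrict hN hmaps, Fintype.sum_bool]
  rfl

theorem exists_character_eq_sum_irreducible [Finite G] [NeZero (Nat.card G : k)]
    (V : FDRep k G) : ∃ (n : ℕ) (S : Fin n → FDRep k G),
      (∀ i, IsIrreducible (S i).ρ) ∧ ∀ g, V.character g = ∑ i, (S i).character g := by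
  induction hn : finrank k V using Nat.strong_induction_on generalizing V with | _ n ih =>
  by_cases hirr : IsIrreducible V.ρ
  · exact ⟨1, fun _ => V, fun _ => hirr, fun g => by simp⟩
  rcases subsingleton_or_nontrivial V with hV | hV
  · refine ⟨0, Fin.elim0, fun i => i.elim0, fun g => ?_⟩
    simp [FDRep.character, Subsingleton.elim (V.ρ g) 0]
  obtain ⟨p, hp_bot, hp_top⟩ : ∃ p : Subrepresentation V.ρ, p ≠ ⊥ ∧ p ≠ ⊤ := by
    by_contra! h
    refine hirr { exists_pair_ne := ⟨⊥, ⊤, fun h => ?_⟩, eq_bot_or_eq_top := fun p => ?_ }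
    · exact bot_ne_top (congrArg Subrepresentation.toSubmodule h : (⊥ : Submodule k V) = ⊤)
    · exact or_iff_not_imp_left.2 (h p)
  -- the complement exists by Maschke's theorem
  obtain ⟨q, hpq⟩ := exists_isCompl p
  have hq_top : q ≠ ⊤ := fun h => hp_bot (eq_bot_of_isCompl_top (h ▸ hpq))
  have hlt {r : Subrepresentation V.ρ} (hr : r ≠ ⊤) : finrank k r.toSubmodule < n :=
    hn ▸ Submodule.finrank_lt fun h => hr (Subrepresentation.toSubmodule_injective h)
  obtain ⟨n₁, S₁, hS₁, hχ₁⟩ := ih _ (hlt hp_top) (FDRep.of p.toRepresentation) rfl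
  obtain ⟨n₂, S₂, hS₂, hχ₂⟩ := ih _ (hlt hq_top) (FDRep.of q.toRepresentation) rfl
  refine ⟨n₁ + n₂, Fin.append S₁ S₂, Fin.addCases (fun i => by rw [Fin.append_left]; exact hS₁ i)
    (fun i => by rw [Fin.append_right]; exact hS₂ i), fun g => ?_⟩
  rw [Fin.sum_univ_add]
  simp only [Fin.append_left, Fin.append_right, ← hχ₁, ← hχ₂]
  exact character_eq_add_of_isCompl V.ρ hpq g

end Decomposition

end Representation

theorem FDRep.simple_of_isIrreducible {k G : Type u} [Field k] [IsAlgClosed k] [CharZero k]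
    [Group G] [Finite G] (V : FDRep k G) [IsIrreducible V.ρ] : Simple V := by
  have := Fintype.ofFinite G
  have := invertibleOfNonzero (NeZero.ne (Nat.card G : k))
  have h := Representation.char_orthonormal V.ρ V.ρ
  rw [if_pos ⟨.refl _⟩, inv_mul_eq_one₀ (NeZero.ne _)] at h
  exact (simple_iff_char_is_norm_one V).mpr h.symm

theorem isoclinic_tensor_summand_dimensions_general
    (K : Type) [Group K] [Fintype K] (G H : Subgroup K)
    (hG : G ⊔ Subgroup.center K = ⊤) (hH : H ⊔ Subgroup.center K = ⊤)
    (ρ₁ ρ₂ : FDRep ℂ ↥G)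
    (ρK₁ ρK₂ : FDRep ℂ K)
    (hres₁ : ∀ g : ↥G, ρK₁.character (g : K) = ρ₁.character g)
    (hres₂ : ∀ g : ↥G, ρK₂.character (g : K) = ρ₂.character g) :
    ∃ (N : ℕ) (S : Fin N → FDRep ℂ ↥G) (T : Fin N → FDRep ℂ ↥H),
      (∀ i, Simple (S i)) ∧ (∀ i, Simple (T i)) ∧
      (∀ g : ↥G, ρ₁.character g * ρ₂.character g = ∑ i, (S i).character g) ∧
      (∀ h : ↥H, ρK₁.character (h : K) * ρK₂.character (h : K) = ∑ i, (T i).character h) ∧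
      (∀ i, (S i).character 1 = (T i).character 1) := by
  obtain ⟨N, U, hU, hχ⟩ := exists_character_eq_sum_irreducible (ρK₁ ⊗ ρK₂)
  have hχK (x : K) : ρK₁.character x * ρK₂.character x = ∑ i, (U i).character x := by
    rw [← hχ, FDRep.char_tensor, Pi.mul_apply]
  have simple_res {L : Subgroup K} (hL : L ⊔ Subgroup.center K = ⊤) (i : Fin N) :
      Simple (FDRep.of ((U i).ρ.comp L.subtype)) :=
    have := hU i
    have : IsIrreducible (FDRep.of ((U i).ρ.comp L.subtype)).ρ :=
      IsIrreducible.comp_subtype (U i).ρ hL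
    FDRep.simple_of_isIrreducible _
  refine ⟨N, fun i => FDRep.of ((U i).ρ.comp G.subtype), fun i => FDRep.of ((U i).ρ.comp H.subtype),
    simple_res hG, simple_res hH, fun g => ?_, fun h => hχK h, fun i => ?_⟩
  · rw [← hres₁, ← hres₂]
    exact hχK g
  · show (U i).character ((1 : G) : K) = (U i).character ((1 : H) : K)
    rw [OneMemClass.coe_one, OneMemClass.coe_one]

/-- Let `G, H ≤ K` be isoclinic finite groups (`K = ⟨G, Z(K)⟩ = ⟨H, Z(K)⟩`),
and let `ρ₁, ρ₂` be irreducible complex representations of `G` extending to representations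
`ρK₁, ρK₂` of `K` (extension expressed on characters).  Then the multisets of dimensions of
the irreducible summands of `ρ₁ ⊗ ρ₂` and of `(ρK₁|_H) ⊗ (ρK₂|_H)` coincide: there are
decompositions into equally many simple summands `S i` resp. `T i` (expressed by character
identities, which determine the decompositions up to isomorphism) with
`dim S i = dim T i` for all `i` (dimensions read off as character values at `1`). -/
theorem isoclinic_tensor_summand_dimensions
    (K : Type) [Group K] [Fintype K] (G H : Subgroup K)
    (hG : G ⊔ Subgroup.center K = ⊤) (hH : H ⊔ Subgroup.center K = ⊤)
    (ρ₁ ρ₂ : FDRep ℂ ↥G) [Simple ρ₁] [Simple ρ₂]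
    (ρK₁ ρK₂ : FDRep ℂ K)
    (hres₁ : ∀ g : ↥G, ρK₁.character (g : K) = ρ₁.character g)
    (hres₂ : ∀ g : ↥G, ρK₂.character (g : K) = ρ₂.character g) :
    ∃ (N : ℕ) (S : Fin N → FDRep ℂ ↥G) (T : Fin N → FDRep ℂ ↥H),
      (∀ i, Simple (S i)) ∧ (∀ i, Simple (T i)) ∧
      (∀ g : ↥G, ρ₁.character g * ρ₂.character g = ∑ i, (S i).character g) ∧
      (∀ h : ↥H, ρK₁.character (h : K) * ρK₂.character (h : K) = ∑ i, (T i).character h) ∧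
      (∀ i, (S i).character 1 = (T i).character 1) :=
  isoclinic_tensor_summand_dimensions_general K G H hG hH ρ₁ ρ₂ ρK₁ ρK₂ hres₁ hres₂
end

section
/- Let G ≤ GL₂(ℂ) be a finite group whose image in PGL₂(ℂ) is a dihedral group D₂ₙ of odd degree n, and suppose -I₂ ∉ G. Then G ≅ H × Cₘ where H ≅ D₂ₙ is a dihedral group of order 2n and m = |G|/(2n) is odd, with Cₘ embedded as scalar matrices. -/
open Matrix

noncomputable section

/-!
Scalar matrices are central, so `K = G ∩ Z(GL₂(ℂ))` is a central subgroup of `G` with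
`G / K ≅ D₂ₙ`. As a finite group of scalars `K` is cyclic, and its order is odd because its
only possible involution is `-I₂`. Such a central extension of `D₂ₙ` splits: lift the
generators to `r, s ∈ G` and correct them by square roots in `K` (squaring is bijective on a
group of odd order) so that they satisfy the dihedral relations. A section with central kernel
then identifies `G` with `D₂ₙ × K`.
-/

namespace Matrix.GeneralLinearGroup

variable {n R : Type*} [Fintype n] [DecidableEq n] [Nonempty n] [CommRing R]

lemma scalar_injective : Function.Injective (scalar n : Rˣ →* GL n R) :=
  fun _ _ h ↦ Units.ext (Matrix.scalar_inj.mp (congrArg Units.val h))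

def centerMulEquivUnits : Subgroup.center (GL n R) ≃* Rˣ :=
  ((MonoidHom.ofInjective scalar_injective).trans
    (MulEquiv.subgroupCongr center_eq_range_scalar.symm)).symm

@[simp]
lemma coe_centerMulEquivUnits_symm (u : Rˣ) :
    ((centerMulEquivUnits (n := n)).symm u : GL n R) = scalar n u := rfl

variable [IsDomain R]

lemma isCyclic_of_le_center {K : Subgroup (GL n R)} [Finite K] (hK : K ≤ Subgroup.center _) :
    IsCyclic K :=
  isCyclic_of_injective_ringHom
    ((Units.coeHom R).comp (centerMulEquivUnits.toMonoidHom.comp (Subgroup.inclusion hK)))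
    (Units.val_injective.comp
      (centerMulEquivUnits.injective.comp (Subgroup.inclusion_injective hK)))

lemma eq_one_or_eq_neg_one_of_mem_center_of_sq_eq_one {z : GL n R}
    (hz : z ∈ Subgroup.center _) (h : z ^ 2 = 1) : z = 1 ∨ z = -1 := by
  set u := centerMulEquivUnits ⟨z, hz⟩
  have hz_eq : z = scalar n u := by
    rw [← coe_centerMulEquivUnits_symm, MulEquiv.symm_apply_apply]
  have hu : u ^ 2 = 1 ^ 2 := by
    rw [one_pow, ← map_pow, ← map_one (centerMulEquivUnits (n := n) (R := R))]
    exact congrArg _ (Subtype.ext h)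
  rcases Units.eq_or_eq_neg_of_sq_eq_sq u 1 hu with hu1 | hu1
  · left; rw [hz_eq, hu1, map_one]
  · right; rw [hz_eq, hu1]; ext i j; by_cases hij : i = j <;> simp [hij]

lemma odd_card_of_le_center {K : Subgroup (GL n R)} [Finite K] (hK : K ≤ Subgroup.center _)
    (hneg : -1 ∉ K) : Odd (Nat.card K) := by
  rw [Nat.odd_iff, ← Nat.two_dvd_ne_zero]
  intro h2
  have := Fact.mk Nat.prime_two
  obtain ⟨x, hx⟩ := exists_prime_orderOf_dvd_card' 2 h2
  have hx2 : (x : GL n R) ^ 2 = 1 := by rw [← Subgroup.coe_pow, ← hx, pow_orderOf_eq_one]; rfl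
  rcases eq_one_or_eq_neg_one_of_mem_center_of_sq_eq_one (hK x.2) hx2 with h | h
  · rw [show x = 1 from Subtype.ext h, orderOf_one] at hx; exact absurd hx (by norm_num)
  · exact hneg (h ▸ x.2)

end Matrix.GeneralLinearGroup

section ZModPow

variable {n : ℕ} [NeZero n]

lemma pow_zmod_val_add {M : Type*} [Monoid M] {a : M} (ha : a ^ n = 1) (i j : ZMod n) :
    a ^ (i + j).val = a ^ i.val * a ^ j.val := by
  rw [ZMod.val_add, ← pow_eq_pow_mod _ ha, pow_add]

lemma pow_zmod_val_sub {G : Type*} [Group G] {a : G} (ha : a ^ n = 1) (i j : ZMod n) :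
    a ^ (j - i).val = (a ^ i.val)⁻¹ * a ^ j.val := by
  rw [eq_inv_mul_iff_mul_eq, ← pow_zmod_val_add ha, add_sub_cancel]

end ZModPow

namespace DihedralGroup

variable {n : ℕ} [NeZero n] {G : Type*} [Group G] {a b : G} (ha : a ^ n = 1) (hb : b ^ 2 = 1)
  (hba : b * a * b⁻¹ = a⁻¹)

def lift : DihedralGroup n →* G where
  toFun
    | r i => a ^ i.val
    | sr i => b * a ^ i.val
  map_one' := by
    show a ^ (0 : ZMod n).val = 1
    rw [ZMod.val_zero, pow_zero]
  map_mul' := by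
    have hb' : b⁻¹ = b := inv_eq_of_mul_eq_one_right (by rw [← sq, hb])
    have hpow : ∀ k : ℕ, a ^ k * b = b * (a ^ k)⁻¹ := fun k ↦ by
      have := map_pow (MulAut.conj b) a k
      simp only [MulAut.conj_apply, hba, inv_pow] at this
      rw [← this, hb', ← mul_assoc, ← mul_assoc, ← sq, hb, one_mul]
    rintro (i | i) (j | j)
    · exact pow_zmod_val_add ha i j
    · show b * a ^ (j - i).val = a ^ i.val * (b * a ^ j.val)
      rw [pow_zmod_val_sub ha, ← mul_assoc (a ^ i.val), hpow, mul_assoc]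
    · show b * a ^ (i + j).val = b * a ^ i.val * a ^ j.val
      rw [pow_zmod_val_add ha, mul_assoc]
    · show a ^ (j - i).val = b * a ^ i.val * (b * a ^ j.val)
      rw [pow_zmod_val_sub ha, mul_assoc b, ← mul_assoc _ b, hpow, ← mul_assoc, ← mul_assoc,
        ← sq, hb, one_mul]

@[simp]
lemma lift_r (i : ZMod n) : lift ha hb hba (r i) = a ^ i.val := rfl

@[simp]
lemma lift_sr (i : ZMod n) : lift ha hb hba (sr i) = b * a ^ i.val := rfl

end DihedralGroup

namespace Subgroup

variable {G : Type*} [Group G] {K : Subgroup G}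

lemma subgroupOf_le_center {H : Subgroup G} (hK : K ≤ center G) : K.subgroupOf H ≤ center H :=
  fun _ hg ↦ mem_center_iff.mpr fun h ↦ Subtype.ext (mem_center_iff.mp (hK hg) h)

lemma exists_mem_sq_eq_of_odd_card (hK : Odd (Nat.card K)) {k : G} (hk : k ∈ K) :
    ∃ c ∈ K, c ^ 2 = k := by
  have hcop : (Nat.card K).Coprime 2 := Nat.coprime_two_right.mpr hK
  refine ⟨(powCoprime hcop).symm ⟨k, hk⟩, SetLike.coe_mem _, ?_⟩
  simpa using congrArg Subtype.val ((powCoprime hcop).apply_symm_apply ⟨k, hk⟩)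

lemma eq_one_of_sq_eq_one_of_odd_card (hK : Odd (Nat.card K)) {k : G} (hk : k ∈ K)
    (h : k ^ 2 = 1) : k = 1 := by
  have hcop : (Nat.card K).Coprime 2 := Nat.coprime_two_right.mpr hK
  have : (⟨k, hk⟩ : K) = 1 := (powCoprime hcop).injective (by ext; simp [powCoprime_apply, h])
  simpa using congrArg Subtype.val this

lemma exists_dihedral_relations_of_le_center {n : ℕ} (hKc : K ≤ center G)
    (hK : Odd (Nat.card K)) {r s : G} (hr : r ^ n ∈ K) (hs : s ^ 2 ∈ K)
    (hsr : s * r * s⁻¹ * r ∈ K) :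
    ∃ c ∈ K, ∃ κ ∈ K, (r * c) ^ n = 1 ∧ (s * κ) ^ 2 = 1 ∧
      s * κ * (r * c) * (s * κ)⁻¹ = (r * c)⁻¹ := by
  obtain ⟨c, hcK, hc⟩ := exists_mem_sq_eq_of_odd_card hK (inv_mem hsr)
  obtain ⟨κ, hκK, hκ⟩ := exists_mem_sq_eq_of_odd_card hK (inv_mem hs)
  have hcc (g : G) : Commute g c := mem_center_iff.mp (hKc hcK) g
  have hκc (g : G) : Commute g κ := mem_center_iff.mp (hKc hκK) g
  have hconj : s * κ * (r * c) * (s * κ)⁻¹ = (r * c)⁻¹ := by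
    rw [← mul_eq_one_iff_eq_inv]
    calc s * κ * (r * c) * (s * κ)⁻¹ * (r * c)
        = s * (κ * (r * c) * κ⁻¹) * s⁻¹ * (r * c) := by group
      _ = s * r * (c * s⁻¹) * (r * c) := by rw [(hκc _).symm.mul_inv_cancel]; group
      _ = s * r * s⁻¹ * (c * r) * c := by rw [← (hcc s⁻¹).eq]; group
      _ = s * r * s⁻¹ * r * c ^ 2 := by rw [← (hcc r).eq, sq]; group
      _ = 1 := by rw [hc, mul_inv_cancel]
  refine ⟨c, hcK, κ, hκK, ?_, ?_, hconj⟩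
  -- `(r * c) ^ n` is central, yet conjugation by `s * κ` inverts it: it is an involution of `K`.
  · have hrcK : (r * c) ^ n ∈ K := by
      rw [(hcc r).mul_pow]
      exact mul_mem hr (pow_mem hcK n)
    have hinv : (r * c) ^ n = ((r * c) ^ n)⁻¹ :=
      calc (r * c) ^ n = s * κ * (r * c) ^ n * (s * κ)⁻¹ :=
            (Commute.mul_inv_cancel (mem_center_iff.mp (hKc hrcK) _)).symm
        _ = (s * κ * (r * c) * (s * κ)⁻¹) ^ n := (conj_pow ..).symm
        _ = ((r * c) ^ n)⁻¹ := by rw [hconj, inv_pow]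
    refine eq_one_of_sq_eq_one_of_odd_card hK hrcK ?_
    rw [sq, mul_eq_one_iff_eq_inv, ← hinv]
  · rw [(hκc s).mul_pow, hκ, mul_inv_cancel]

end Subgroup

namespace MonoidHom

variable {G H : Type*} [Group G] [Group H]

def prodKerMulEquivOfRightInverse (E : G →* H) (φ : H →* G) (hφ : Function.RightInverse φ E)
    (hc : E.ker ≤ Subgroup.center G) : H × E.ker ≃* G :=
  MulEquiv.ofBijective
    (φ.noncommCoprod E.ker.subtype fun h k ↦ Subgroup.mem_center_iff.mp (hc k.2) (φ h))
    ⟨by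
      rw [injective_iff_map_eq_one]
      rintro ⟨h, k, hk⟩ hφk
      change φ h * k = 1 at hφk
      have hh : h = 1 := by simpa [hφ h, mem_ker.mp hk] using congrArg E hφk
      subst hh
      simpa using hφk,
    fun g ↦ ⟨(E g, ⟨(φ (E g))⁻¹ * g, by simp [hφ (E g)]⟩),
      mul_inv_cancel_left _ _⟩⟩

end MonoidHom

namespace DihedralGroup

variable {n : ℕ} [NeZero n] {G : Type*} [Group G]

theorem exists_rightInverse_of_ker_le_center {E : G →* DihedralGroup n}
    (hE : Function.Surjective E) (hc : E.ker ≤ Subgroup.center G) (hodd : Odd (Nat.card E.ker)) :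
    ∃ φ : DihedralGroup n →* G, Function.RightInverse φ E := by
  obtain ⟨a, ha⟩ := hE (r 1)
  obtain ⟨b, hb⟩ := hE (sr 0)
  obtain ⟨c, hc, κ, hκ, hrn, hs2, hsr⟩ :=
    Subgroup.exists_dihedral_relations_of_le_center hc hodd (n := n) (r := a) (s := b)
      (by simp [ha]) (by simp [hb, sq]) (by simp [ha, hb])
  refine ⟨lift hrn hs2 hsr, ?_⟩
  have hac : E (a * c) = r 1 := by rw [map_mul, ha, MonoidHom.mem_ker.mp hc, mul_one]
  have hbκ : E (b * κ) = sr 0 := by rw [map_mul, hb, MonoidHom.mem_ker.mp hκ, mul_one]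
  rintro (i | i) <;> simp [hac, hbκ]

theorem nonempty_mulEquiv_prod_ker {E : G →* DihedralGroup n}
    (hE : Function.Surjective E) (hc : E.ker ≤ Subgroup.center G) (hodd : Odd (Nat.card E.ker)) :
    Nonempty (G ≃* DihedralGroup n × E.ker) :=
  let ⟨φ, hφ⟩ := exists_rightInverse_of_ker_le_center hE hc hodd
  ⟨(E.prodKerMulEquivOfRightInverse φ hφ hc).symm⟩

end DihedralGroup

theorem noncentral_dihedral_extension_structure_general (n : ℕ) (hnodd : Odd n)
    (G : Subgroup (Matrix.GeneralLinearGroup (Fin 2) ℂ)) [Finite G]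
    (himage : Nonempty (↥(Subgroup.map projPGL2 G) ≃* DihedralGroup n))
    (hneg : (-1 : Matrix.GeneralLinearGroup (Fin 2) ℂ) ∉ G) :
    ∃ m : ℕ, Odd m ∧ 2 * n * m = Nat.card G ∧
      Nonempty (↥G ≃* DihedralGroup n × Multiplicative (ZMod m)) ∧
      Nonempty (↥(G ⊓ Subgroup.center (Matrix.GeneralLinearGroup (Fin 2) ℂ))
        ≃* Multiplicative (ZMod m)) := by
  have : NeZero n := ⟨hnodd.pos.ne'⟩
  obtain ⟨e⟩ := himage
  set Z := Subgroup.center (GL (Fin 2) ℂ)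
  let E : G →* DihedralGroup n := e.toMonoidHom.comp (projPGL2.subgroupMap G)
  have hker : E.ker = (G ⊓ Z).subgroupOf G := by
    rw [Subgroup.inf_subgroupOf_left, ← QuotientGroup.ker_mk' Z, ← Subgroup.ker_subgroupMap]
    ext g
    exact e.map_eq_one_iff
  have hkerZ : E.ker ≤ Subgroup.center G := hker ▸ Subgroup.subgroupOf_le_center inf_le_right
  let eK : E.ker ≃* ↥(G ⊓ Z) :=
    (MulEquiv.subgroupCongr hker).trans (Subgroup.subgroupOfEquivOfLe inf_le_left)
  have : Finite ↥(G ⊓ Z) := Finite.of_injective _ (Subgroup.inclusion_injective inf_le_left)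
  have := GeneralLinearGroup.isCyclic_of_le_center (K := G ⊓ Z) inf_le_right
  set m := Nat.card ↥(G ⊓ Z)
  have hodd : Odd m := GeneralLinearGroup.odd_card_of_le_center inf_le_right fun h ↦ hneg h.1
  have hcardC : Nat.card (Multiplicative (ZMod m)) = m := by
    rw [Nat.card_congr Multiplicative.toAdd, Nat.card_zmod]
  let eC : ↥(G ⊓ Z) ≃* Multiplicative (ZMod m) := mulEquivOfCyclicCardEq hcardC.symm
  obtain ⟨eG⟩ := DihedralGroup.nonempty_mulEquiv_prod_ker
    (e.surjective.comp (projPGL2.subgroupMap_surjective G)) hkerZ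
    (by rwa [Nat.card_congr eK.toEquiv])
  let eG' := eG.trans (MulEquiv.prodCongr (MulEquiv.refl _) (eK.trans eC))
  refine ⟨m, hodd, ?_, ⟨eG'⟩, ⟨eC⟩⟩
  rw [Nat.card_congr eG'.toEquiv, Nat.card_prod, DihedralGroup.nat_card, hcardC]

/-- Let `G ≤ GL₂(ℂ)` be a finite group whose image in `PGL₂(ℂ)` is a
dihedral group `D₂ₙ` of odd degree `n ≥ 3`, and suppose `-I₂ ∉ G`.  Then
`G ≅ H × Cₘ`, where `H ≅ D₂ₙ` is a dihedral group of order `2n` and `m = |G|/(2n)` is odd,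
with `Cₘ` embedded as the subgroup of scalar matrices of `G` (the intersection of `G` with
the centre of `GL₂(ℂ)`). -/
theorem noncentral_dihedral_extension_structure (n : ℕ) (hn3 : 3 ≤ n) (hnodd : Odd n)
    (G : Subgroup (Matrix.GeneralLinearGroup (Fin 2) ℂ)) [Finite G]
    (himage : Nonempty (↥(Subgroup.map projPGL2 G) ≃* DihedralGroup n))
    (hneg : (-1 : Matrix.GeneralLinearGroup (Fin 2) ℂ) ∉ G) :
    ∃ m : ℕ, Odd m ∧ 2 * n * m = Nat.card G ∧
      Nonempty (↥G ≃* DihedralGroup n × Multiplicative (ZMod m)) ∧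
      Nonempty (↥(G ⊓ Subgroup.center (Matrix.GeneralLinearGroup (Fin 2) ℂ))
        ≃* Multiplicative (ZMod m)) :=
  noncentral_dihedral_extension_structure_general n hnodd G himage hneg
end
end
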